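/- arXiv:math/0105105 — 2 statements merged into one kernel-verified Lean document; each statement's English description precedes it below -/
import Mathlib

section
/- Let (H,R) be a bialgebroid with an anti-algebra map T: H → H satisfying Tβ = α. If two elements h, g ∈ H each satisfy the identity T(x⁽¹⁾)⁽¹⁾x⁽²⁾ ⊗_R T(x⁽¹⁾)⁽²⁾ = 1_H ⊗_R T(x), then their product hg also satisfies this identity. -/
open TensorProduct

noncomputable section

/-- The data of a (pre-)bialgebroid: total algebra `H`, base algebra `R`,
source map `α` (algebra map), target map `β` (anti-algebra map), a linear lift
`Δ : H → H ⊗[k] H` of the coproduct, and the counit `ε`. -/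
structure PreBialgebroid (k H R : Type) [Field k] [Ring H] [Algebra k H]
    [Ring R] [Algebra k R] where
  α : R →ₐ[k] H
  β : R →ₗ[k] H
  β_one : β 1 = 1
  β_mul : ∀ a b : R, β (a * b) = β b * β a
  αβ_comm : ∀ a b : R, α a * β b = β b * α a
  Δ : H →ₗ[k] H ⊗[k] H
  ε : H →ₗ[k] R

namespace PreBialgebroid

variable {k H R : Type} [Field k] [Ring H] [Algebra k H] [Ring R] [Algebra k R]
variable (D : PreBialgebroid k H R)

/-- The submodule of `H ⊗[k] H` by which one divides to obtain `H ⊗_R H`. -/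
def rel2 : Submodule k (H ⊗[k] H) :=
  Submodule.span k {z | ∃ (r : R) (x y : H), z = (D.β r * x) ⊗ₜ[k] y - x ⊗ₜ[k] (D.α r * y)}

/-- The projection `H ⊗[k] H → H ⊗_R H`. -/
def π2 : H ⊗[k] H →ₗ[k] (H ⊗[k] H) ⧸ D.rel2 := D.rel2.mkQ

/-- Relations for the triple tensor product `H ⊗_R H ⊗_R H` (right associated). -/
def rel3 : Submodule k (H ⊗[k] (H ⊗[k] H)) :=
  Submodule.span k {z |
    (∃ (r : R) (x y w : H), z = (D.β r * x) ⊗ₜ[k] (y ⊗ₜ[k] w) - x ⊗ₜ[k] ((D.α r * y) ⊗ₜ[k] w)) ∨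
    (∃ (r : R) (x y w : H), z = x ⊗ₜ[k] ((D.β r * y) ⊗ₜ[k] w) - x ⊗ₜ[k] (y ⊗ₜ[k] (D.α r * w)))}

def π3 : H ⊗[k] (H ⊗[k] H) →ₗ[k] (H ⊗[k] (H ⊗[k] H)) ⧸ D.rel3 := D.rel3.mkQ

/-- For a linear map `f : H → H`, the map `x ⊗ y ↦ f x * y`. -/
def mulL (f : H →ₗ[k] H) : H ⊗[k] H →ₗ[k] H :=
  TensorProduct.lift
    (LinearMap.mk₂ k (fun x y => f x * y)
      (by intro x x' y; simp [map_add, add_mul])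
      (by intro c x y; simp [map_smul, smul_mul_assoc])
      (by intro x y y'; simp [mul_add])
      (by intro c x y; simp [mul_smul_comm]))

/-- For a linear map `f : H → H`, the map `x ⊗ y ↦ f y * x`. -/
def mulR (f : H →ₗ[k] H) : H ⊗[k] H →ₗ[k] H :=
  TensorProduct.lift
    (LinearMap.mk₂ k (fun x y => f y * x)
      (by intro x x' y; simp [mul_add])
      (by intro c x y; simp [mul_smul_comm])
      (by intro x y y'; simp [map_add, add_mul])
      (by intro c x y; simp [map_smul, smul_mul_assoc]))

/-- The (lift of the) Connes–Moscovici cyclic operator in degree 2: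
`x ⊗ y ↦ Δ(T x) · (y ⊗ 1)`. -/
def tau2 (T : H →ₗ[k] H) : H ⊗[k] H →ₗ[k] H ⊗[k] H :=
  TensorProduct.lift
    (LinearMap.mk₂ k (fun x y => D.Δ (T x) * (y ⊗ₜ[k] (1 : H)))
      (by intro x x' y; simp [map_add, add_mul])
      (by intro c x y; simp [map_smul, smul_mul_assoc])
      (by intro x y y'; simp [add_tmul, mul_add])
      (by intro c x y; simp [← TensorProduct.smul_tmul', mul_smul_comm]))

/-- The bialgebroid axioms, stated for the chosen linear lift `Δ` of the coproduct
modulo the relations defining `H ⊗_R H`. -/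
structure IsBialgebroid : Prop where
  Δ_one : D.π2 (D.Δ 1) = D.π2 ((1 : H) ⊗ₜ[k] (1 : H))
  coassoc : ∀ h : H,
    D.π3 ((TensorProduct.assoc k H H H) ((D.Δ.rTensor H) (D.Δ h))) =
      D.π3 ((D.Δ.lTensor H) (D.Δ h))
  Δ_cp3 : ∀ (h : H) (r : R),
    D.π2 (D.Δ h * (D.β r ⊗ₜ[k] (1 : H) - (1 : H) ⊗ₜ[k] D.α r)) = 0
  Δ_mul : ∀ a b : H, D.π2 (D.Δ (a * b)) = D.π2 (D.Δ a * D.Δ b)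
  Δ_left : ∀ (r : R) (h : H),
    D.π2 (D.Δ (D.α r * h)) = D.π2 ((D.α r ⊗ₜ[k] (1 : H)) * D.Δ h)
  Δ_right : ∀ (r : R) (h : H),
    D.π2 (D.Δ (D.β r * h)) = D.π2 (((1 : H) ⊗ₜ[k] D.β r) * D.Δ h)
  ε_one : D.ε 1 = 1
  ε_left : ∀ (r : R) (h : H), D.ε (D.α r * h) = r * D.ε h
  ε_right : ∀ (r : R) (h : H), D.ε (D.β r * h) = D.ε h * r
  counit_l : ∀ h : H, mulL (D.α.toLinearMap ∘ₗ D.ε) (D.Δ h) = h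
  counit_r : ∀ h : H, mulR (D.β ∘ₗ D.ε) (D.Δ h) = h

/-- The para-Hopf algebroid axioms for a para-antipode `T`. -/
structure IsParaHopf (T : H →ₗ[k] H) : Prop where
  bialgebroid : D.IsBialgebroid
  T_one : T 1 = 1
  T_antimul : ∀ a b : H, T (a * b) = T b * T a
  PH1 : ∀ r : R, T (D.β r) = D.α r
  PH2 : ∀ h : H, mulL T (D.Δ h) = D.β (D.ε (T h))
  T_invol : ∀ h : H, T (T h) = h
  PH3 : ∀ h : H, D.π2 (tau2 D T (D.Δ h)) = D.π2 ((1 : H) ⊗ₜ[k] T h)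

end PreBialgebroid


namespace PreBialgebroid

section Aux

variable {k H R : Type} [Field k] [Ring H] [Algebra k H] [Ring R] [Algebra k R]
variable (D : PreBialgebroid k H R)

lemma mem_rel2_gen (r : R) (x y : H) :
    (D.β r * x) ⊗ₜ[k] y - x ⊗ₜ[k] (D.α r * y) ∈ D.rel2 :=
  Submodule.subset_span ⟨r, x, y, rfl⟩

lemma π2_eq_iff (u v : H ⊗[k] H) : D.π2 u = D.π2 v ↔ u - v ∈ D.rel2 := by
  simp only [π2, Submodule.mkQ_apply, Submodule.Quotient.eq]

lemma rel2_mul_right {z : H ⊗[k] H} (hz : z ∈ D.rel2) (w : H ⊗[k] H) :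
    z * w ∈ D.rel2 := by
  induction w using TensorProduct.induction_on with
  | zero => simpa using D.rel2.zero_mem
  | add u v hu hv => rw [mul_add]; exact D.rel2.add_mem hu hv
  | tmul a b =>
    refine Submodule.span_induction (p := fun z _ => z * (a ⊗ₜ[k] b) ∈ D.rel2) ?_ ?_ ?_ ?_ hz
    · rintro _ ⟨r, x, y, rfl⟩
      have e : ((D.β r * x) ⊗ₜ[k] y - x ⊗ₜ[k] (D.α r * y)) * (a ⊗ₜ[k] b)
          = (D.β r * (x * a)) ⊗ₜ[k] (y * b) - (x * a) ⊗ₜ[k] (D.α r * (y * b)) := by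
        simp [sub_mul, Algebra.TensorProduct.tmul_mul_tmul, mul_assoc]
      rw [e]; exact D.mem_rel2_gen r _ _
    · simp
    · intro x y _ _ hx hy; rw [add_mul]; exact D.rel2.add_mem hx hy
    · intro c x _ hx; rw [smul_mul_assoc]; exact D.rel2.smul_mem c hx

lemma rel2_Δ_mul_left (hD : D.IsBialgebroid) (a : H) {z : H ⊗[k] H} (hz : z ∈ D.rel2) :
    D.Δ a * z ∈ D.rel2 := by
  refine Submodule.span_induction (p := fun z _ => D.Δ a * z ∈ D.rel2) ?_ ?_ ?_ ?_ hz
  · rintro _ ⟨r, x, y, rfl⟩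
    have e : ((D.β r * x) ⊗ₜ[k] y - x ⊗ₜ[k] (D.α r * y))
        = (D.β r ⊗ₜ[k] (1 : H) - (1 : H) ⊗ₜ[k] D.α r) * (x ⊗ₜ[k] y) := by
      simp [sub_mul, Algebra.TensorProduct.tmul_mul_tmul]
    have h1 : D.Δ a * (D.β r ⊗ₜ[k] (1 : H) - (1 : H) ⊗ₜ[k] D.α r) ∈ D.rel2 := by
      have h := hD.Δ_cp3 a r
      rwa [π2, Submodule.mkQ_apply, Submodule.Quotient.mk_eq_zero] at h
    rw [e, ← mul_assoc]
    exact D.rel2_mul_right h1 _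
  · simp
  · intro x y _ _ hx hy; rw [mul_add]; exact D.rel2.add_mem hx hy
  · intro c x _ hx; rw [mul_smul_comm]; exact D.rel2.smul_mem c hx

lemma rel2_α_mul_left (r : R) {z : H ⊗[k] H} (hz : z ∈ D.rel2) :
    (D.α r ⊗ₜ[k] (1 : H)) * z ∈ D.rel2 := by
  refine Submodule.span_induction (p := fun z _ => (D.α r ⊗ₜ[k] (1 : H)) * z ∈ D.rel2)
    ?_ ?_ ?_ ?_ hz
  · rintro _ ⟨r', x, y, rfl⟩
    have e : (D.α r ⊗ₜ[k] (1 : H)) * ((D.β r' * x) ⊗ₜ[k] y - x ⊗ₜ[k] (D.α r' * y))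
        = (D.β r' * (D.α r * x)) ⊗ₜ[k] ((1 : H) * y)
          - (D.α r * x) ⊗ₜ[k] (D.α r' * ((1 : H) * y)) := by
      rw [mul_sub]
      simp only [Algebra.TensorProduct.tmul_mul_tmul, one_mul]
      rw [← mul_assoc, D.αβ_comm r r', mul_assoc]
    rw [e]; exact D.mem_rel2_gen r' _ _
  · simp
  · intro x y _ _ hx hy; rw [mul_add]; exact D.rel2.add_mem hx hy
  · intro c x _ hx; rw [mul_smul_comm]; exact D.rel2.smul_mem c hx

lemma Δ_α_rel (hD : D.IsBialgebroid) (r : R) :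
    D.Δ (D.α r) - D.α r ⊗ₜ[k] (1 : H) ∈ D.rel2 := by
  have m1 : D.Δ (D.α r) - (D.α r ⊗ₜ[k] (1 : H)) * D.Δ 1 ∈ D.rel2 := by
    have h := hD.Δ_left r 1
    rw [mul_one] at h
    exact (D.π2_eq_iff _ _).mp h
  have m2 : (D.α r ⊗ₜ[k] (1 : H)) * (D.Δ 1 - (1 : H) ⊗ₜ[k] (1 : H)) ∈ D.rel2 :=
    D.rel2_α_mul_left r ((D.π2_eq_iff _ _).mp hD.Δ_one)
  have e : D.Δ (D.α r) - D.α r ⊗ₜ[k] (1 : H)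
      = (D.Δ (D.α r) - (D.α r ⊗ₜ[k] (1 : H)) * D.Δ 1)
        + (D.α r ⊗ₜ[k] (1 : H)) * (D.Δ 1 - (1 : H) ⊗ₜ[k] (1 : H)) := by
    rw [mul_sub]
    simp only [Algebra.TensorProduct.tmul_mul_tmul, mul_one]
    abel
  rw [e]; exact D.rel2.add_mem m1 m2

lemma tau2_tmul (T : H →ₗ[k] H) (x y : H) :
    tau2 D T (x ⊗ₜ[k] y) = D.Δ (T x) * (y ⊗ₜ[k] (1 : H)) := by
  simp [tau2]

lemma tau2_rel2 (hD : D.IsBialgebroid) (T : H →ₗ[k] H)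
    (hTm : ∀ a b : H, T (a * b) = T b * T a) (hPH1 : ∀ r : R, T (D.β r) = D.α r)
    {z : H ⊗[k] H} (hz : z ∈ D.rel2) : tau2 D T z ∈ D.rel2 := by
  refine Submodule.span_induction (p := fun z _ => tau2 D T z ∈ D.rel2) ?_ ?_ ?_ ?_ hz
  · rintro _ ⟨r, x, y, rfl⟩
    rw [map_sub, tau2_tmul, tau2_tmul, hTm, hPH1]
    have d1 : D.Δ (T x * D.α r) - D.Δ (T x) * D.Δ (D.α r) ∈ D.rel2 :=
      (D.π2_eq_iff _ _).mp (hD.Δ_mul (T x) (D.α r))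
    have d2 : D.Δ (T x) * (D.Δ (D.α r) - D.α r ⊗ₜ[k] (1 : H)) ∈ D.rel2 :=
      D.rel2_Δ_mul_left hD (T x) (D.Δ_α_rel hD r)
    have d3 : D.Δ (T x * D.α r) - D.Δ (T x) * (D.α r ⊗ₜ[k] (1 : H)) ∈ D.rel2 := by
      have e : D.Δ (T x * D.α r) - D.Δ (T x) * (D.α r ⊗ₜ[k] (1 : H))
          = (D.Δ (T x * D.α r) - D.Δ (T x) * D.Δ (D.α r))
            + D.Δ (T x) * (D.Δ (D.α r) - D.α r ⊗ₜ[k] (1 : H)) := by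
        rw [mul_sub]; abel
      rw [e]; exact D.rel2.add_mem d1 d2
    have e2 : D.Δ (T x * D.α r) * (y ⊗ₜ[k] (1 : H)) - D.Δ (T x) * ((D.α r * y) ⊗ₜ[k] (1 : H))
        = (D.Δ (T x * D.α r) - D.Δ (T x) * (D.α r ⊗ₜ[k] (1 : H))) * (y ⊗ₜ[k] (1 : H)) := by
      rw [sub_mul, mul_assoc]
      simp [Algebra.TensorProduct.tmul_mul_tmul]
    rw [e2]
    exact D.rel2_mul_right d3 _
  · simp
  · intro x y _ _ hx hy; rw [map_add]; exact D.rel2.add_mem hx hy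
  · intro c x _ hx; rw [map_smul]; exact D.rel2.smul_mem c hx

/-- `Gmap T u (x ⊗ y) = Δ(T x) * u * (y ⊗ 1)`. -/
def Gmap (T : H →ₗ[k] H) (u : H ⊗[k] H) : H ⊗[k] H →ₗ[k] H ⊗[k] H :=
  TensorProduct.lift
    (LinearMap.mk₂ k (fun x y => D.Δ (T x) * u * (y ⊗ₜ[k] (1 : H)))
      (by intro x x' y; simp [map_add, add_mul])
      (by intro c x y; simp [map_smul, smul_mul_assoc])
      (by intro x y y'; simp [add_tmul, mul_add])
      (by intro c x y; simp [← TensorProduct.smul_tmul', mul_smul_comm]))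

lemma Gmap_tmul (T : H →ₗ[k] H) (u : H ⊗[k] H) (x y : H) :
    D.Gmap T u (x ⊗ₜ[k] y) = D.Δ (T x) * u * (y ⊗ₜ[k] (1 : H)) := by
  simp [Gmap]

lemma Gmap_add_left (T : H →ₗ[k] H) (u v w : H ⊗[k] H) :
    D.Gmap T (u + v) w = D.Gmap T u w + D.Gmap T v w := by
  induction w using TensorProduct.induction_on with
  | zero => simp
  | tmul x y => simp only [Gmap_tmul, mul_add, add_mul]
  | add w1 w2 h1 h2 => simp only [map_add, h1, h2]; abel

lemma Gmap_zero_left (T : H →ₗ[k] H) (w : H ⊗[k] H) : D.Gmap T 0 w = 0 := by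
  induction w using TensorProduct.induction_on with
  | zero => simp
  | tmul x y => simp [Gmap_tmul]
  | add w1 w2 h1 h2 => simp [h1, h2]

lemma Gmap_sub_rel (hD : D.IsBialgebroid) (T : H →ₗ[k] H) {u v : H ⊗[k] H}
    (huv : u - v ∈ D.rel2) (w : H ⊗[k] H) :
    D.Gmap T u w - D.Gmap T v w ∈ D.rel2 := by
  induction w using TensorProduct.induction_on with
  | zero => simpa using D.rel2.zero_mem
  | tmul x y =>
    have e : D.Gmap T u (x ⊗ₜ[k] y) - D.Gmap T v (x ⊗ₜ[k] y)
        = (D.Δ (T x) * (u - v)) * (y ⊗ₜ[k] (1 : H)) := by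
      rw [Gmap_tmul, Gmap_tmul, mul_sub, sub_mul]
    rw [e]
    exact D.rel2_mul_right (D.rel2_Δ_mul_left hD (T x) huv) _
  | add w1 w2 h1 h2 =>
    have e : D.Gmap T u (w1 + w2) - D.Gmap T v (w1 + w2)
        = (D.Gmap T u w1 - D.Gmap T v w1) + (D.Gmap T u w2 - D.Gmap T v w2) := by
      rw [map_add, map_add]; abel
    rw [e]; exact D.rel2.add_mem h1 h2

lemma tau2_mul_rel (hD : D.IsBialgebroid) (T : H →ₗ[k] H)
    (hTm : ∀ a b : H, T (a * b) = T b * T a) (u w : H ⊗[k] H) :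
    tau2 D T (u * w) - D.Gmap T (tau2 D T u) w ∈ D.rel2 := by
  induction u using TensorProduct.induction_on with
  | zero => simpa [Gmap_zero_left] using D.rel2.zero_mem
  | add u1 u2 h1 h2 =>
    have e : tau2 D T ((u1 + u2) * w) - D.Gmap T (tau2 D T (u1 + u2)) w
        = (tau2 D T (u1 * w) - D.Gmap T (tau2 D T u1) w)
          + (tau2 D T (u2 * w) - D.Gmap T (tau2 D T u2) w) := by
      rw [add_mul, map_add, map_add, Gmap_add_left]; abel
    rw [e]; exact D.rel2.add_mem h1 h2
  | tmul a b =>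
    induction w using TensorProduct.induction_on with
    | zero => simpa using D.rel2.zero_mem
    | add w1 w2 h1 h2 =>
      have e : tau2 D T (a ⊗ₜ[k] b * (w1 + w2)) - D.Gmap T (tau2 D T (a ⊗ₜ[k] b)) (w1 + w2)
          = (tau2 D T (a ⊗ₜ[k] b * w1) - D.Gmap T (tau2 D T (a ⊗ₜ[k] b)) w1)
            + (tau2 D T (a ⊗ₜ[k] b * w2) - D.Gmap T (tau2 D T (a ⊗ₜ[k] b)) w2) := by
        rw [mul_add, map_add, map_add]; abel
      rw [e]; exact D.rel2.add_mem h1 h2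
    | tmul c d =>
      have e : tau2 D T (a ⊗ₜ[k] b * c ⊗ₜ[k] d) - D.Gmap T (tau2 D T (a ⊗ₜ[k] b)) (c ⊗ₜ[k] d)
          = (D.Δ (T c * T a) - D.Δ (T c) * D.Δ (T a)) * ((b * d) ⊗ₜ[k] (1 : H)) := by
        rw [Algebra.TensorProduct.tmul_mul_tmul, tau2_tmul, tau2_tmul, Gmap_tmul, hTm,
          sub_mul, mul_assoc, mul_assoc, mul_assoc]
        simp [Algebra.TensorProduct.tmul_mul_tmul]
      rw [e]
      exact D.rel2_mul_right ((D.π2_eq_iff _ _).mp (hD.Δ_mul (T c) (T a))) _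

lemma Gmap_one_tmul (T : H →ₗ[k] H) (t : H) (w : H ⊗[k] H) :
    D.Gmap T ((1 : H) ⊗ₜ[k] t) w = tau2 D T w * ((1 : H) ⊗ₜ[k] t) := by
  induction w using TensorProduct.induction_on with
  | zero => simp
  | tmul x y =>
    rw [Gmap_tmul, tau2_tmul, mul_assoc, mul_assoc]
    simp [Algebra.TensorProduct.tmul_mul_tmul]
  | add w1 w2 h1 h2 => rw [map_add, map_add, add_mul, h1, h2]

end Aux

end PreBialgebroid

/-- the identity `T(x⁽¹⁾)⁽¹⁾x⁽²⁾ ⊗_R T(x⁽¹⁾)⁽²⁾ = 1 ⊗_R T(x)` is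
multiplicative: if it holds for `h` and `g`, then it holds for `h * g`. -/
theorem paraHopf_condition_multiplicative
    {k H R : Type} [Field k] [Ring H] [Algebra k H] [Ring R] [Algebra k R]
    (D : PreBialgebroid k H R) (hD : D.IsBialgebroid)
    (T : H →ₗ[k] H) (hT1 : T 1 = 1) (hTm : ∀ a b : H, T (a * b) = T b * T a)
    (hPH1 : ∀ r : R, T (D.β r) = D.α r)
    (h g : H)
    (hh : D.π2 (PreBialgebroid.tau2 D T (D.Δ h)) = D.π2 ((1 : H) ⊗ₜ[k] T h))
    (hg : D.π2 (PreBialgebroid.tau2 D T (D.Δ g)) = D.π2 ((1 : H) ⊗ₜ[k] T g)) :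
    D.π2 (PreBialgebroid.tau2 D T (D.Δ (h * g))) = D.π2 ((1 : H) ⊗ₜ[k] T (h * g)) := by
  open PreBialgebroid in
  rw [D.π2_eq_iff]
  have hA : tau2 D T (D.Δ (h * g)) - tau2 D T (D.Δ h * D.Δ g) ∈ D.rel2 := by
    rw [← map_sub]
    exact D.tau2_rel2 hD T hTm hPH1 ((D.π2_eq_iff _ _).mp (hD.Δ_mul h g))
  have hB : tau2 D T (D.Δ h * D.Δ g) - D.Gmap T (tau2 D T (D.Δ h)) (D.Δ g) ∈ D.rel2 :=
    D.tau2_mul_rel hD T hTm (D.Δ h) (D.Δ g)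
  have hC : D.Gmap T (tau2 D T (D.Δ h)) (D.Δ g)
      - D.Gmap T ((1 : H) ⊗ₜ[k] T h) (D.Δ g) ∈ D.rel2 :=
    D.Gmap_sub_rel hD T ((D.π2_eq_iff _ _).mp hh) (D.Δ g)
  have hE : D.Gmap T ((1 : H) ⊗ₜ[k] T h) (D.Δ g) - (1 : H) ⊗ₜ[k] T (h * g) ∈ D.rel2 := by
    rw [D.Gmap_one_tmul]
    have e : tau2 D T (D.Δ g) * ((1 : H) ⊗ₜ[k] T h) - (1 : H) ⊗ₜ[k] T (h * g)
        = (tau2 D T (D.Δ g) - (1 : H) ⊗ₜ[k] T g) * ((1 : H) ⊗ₜ[k] T h) := by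
      rw [sub_mul, Algebra.TensorProduct.tmul_mul_tmul, one_mul, hTm]
    rw [e]
    exact D.rel2_mul_right ((D.π2_eq_iff _ _).mp hg) _
  have e : tau2 D T (D.Δ (h * g)) - (1 : H) ⊗ₜ[k] T (h * g)
      = (tau2 D T (D.Δ (h * g)) - tau2 D T (D.Δ h * D.Δ g))
        + (tau2 D T (D.Δ h * D.Δ g) - D.Gmap T (tau2 D T (D.Δ h)) (D.Δ g))
        + (D.Gmap T (tau2 D T (D.Δ h)) (D.Δ g) - D.Gmap T ((1 : H) ⊗ₜ[k] T h) (D.Δ g))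
        + (D.Gmap T ((1 : H) ⊗ₜ[k] T h) (D.Δ g) - (1 : H) ⊗ₜ[k] T (h * g)) := by abel
  rw [e]
  exact D.rel2.add_mem (D.rel2.add_mem (D.rel2.add_mem hA hB) hC) hE
end
end

section
/- Let 𝓗 be a Hopf algebra over a field k with antipode S, and suppose T: 𝓗 → 𝓗 is an anti-algebra map satisfying T(h⁽¹⁾)⁽¹⁾h⁽²⁾ ⊗ T(h⁽¹⁾)⁽²⁾ = 1 ⊗ T(h) for all h ∈ 𝓗. Then δ := ε∘T is an algebra map 𝓗 → k and T = δ * S, i.e. T(h) = δ(h⁽¹⁾)S(h⁽²⁾) for all h. -/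
/-!
Applying `id ⊗ ε` and multiplying out, the cyclic condition says exactly that the convolution
`T * id` equals `η ∘ ε ∘ T`. Since `S` is the convolution inverse of `id`,
`T = T * (id * S) = (T * id) * S = (η ∘ ε ∘ T) * S`, which is `δ * S` for `δ = ε ∘ T`;
that `δ` is a character follows from `T` being anti-multiplicative and `ε` multiplicative.
-/

open TensorProduct Coalgebra

noncomputable section

variable {k 𝓗 : Type} [Field k] [Ring 𝓗] [HopfAlgebra k 𝓗]

/-- The convolution `δ * S` for a character `δ : 𝓗 → k`:
`h ↦ δ(h⁽¹⁾) S(h⁽²⁾)`. -/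
def twistedAntipode (δ : 𝓗 →ₐ[k] k) : 𝓗 →ₗ[k] 𝓗 :=
  (TensorProduct.lift
    (LinearMap.mk₂ k (fun x y => δ x • HopfAlgebra.antipode (R := k) y)
      (by intro x x' y; simp [map_add, add_smul])
      (by intro c x y; simp [mul_smul])
      (by intro x y y'; simp [map_add, smul_add])
      (by intro c x y; simp only [map_smul]; rw [smul_comm]))) ∘ₗ comul

/-- The (lift of the) degree-2 cyclic operator for a linear map `T`:
`x ⊗ y ↦ Δ(T x) · (y ⊗ 1)`. -/
def tau2Hopf (T : 𝓗 →ₗ[k] 𝓗) : 𝓗 ⊗[k] 𝓗 →ₗ[k] 𝓗 ⊗[k] 𝓗 :=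
  TensorProduct.lift
    (LinearMap.mk₂ k (fun x y => comul (R := k) (T x) * (y ⊗ₜ[k] (1 : 𝓗)))
      (by intro x x' y; simp [map_add, add_mul])
      (by intro c x y; simp [map_smul, smul_mul_assoc])
      (by intro x y y'; simp [add_tmul, mul_add])
      (by intro c x y; simp [← TensorProduct.smul_tmul', mul_smul_comm]))

open WithConv

section Bialgebra

variable {R A : Type*} [CommSemiring R] [Semiring A] [Bialgebra R A]

lemma rid_lTensor_counit_comul (a : A) :
    TensorProduct.rid R A (LinearMap.lTensor A counit (comul a)) = a := by
  rw [lTensor_counit_comul, TensorProduct.rid_tmul, one_smul]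

lemma rid_lTensor_counit_mul_tmul_one (u : A ⊗[R] A) (y : A) :
    TensorProduct.rid R A (LinearMap.lTensor A counit (u * (y ⊗ₜ[R] (1 : A))))
      = TensorProduct.rid R A (LinearMap.lTensor A counit u) * y := by
  induction u using TensorProduct.induction_on with
  | zero => simp
  | tmul a b => simp
  | add u v hu hv => rw [add_mul, map_add, map_add, hu, hv, map_add, map_add, add_mul]

end Bialgebra

lemma Coalgebra.Repr.convMul_algebraMap_comp_apply {R C A ι : Type*} [CommSemiring R]
    [AddCommMonoid C] [Module R C] [Coalgebra R C] [Semiring A] [Algebra R A] {c : C}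
    (𝓡 : Coalgebra.Repr R c ι) (φ : C →ₗ[R] R) (g : C →ₗ[R] A) :
    (toConv (Algebra.linearMap R A ∘ₗ φ) * toConv g) c
      = ∑ i ∈ 𝓡.index, φ (𝓡.left i) • g (𝓡.right i) := by
  simp [𝓡.convMul_apply, Algebra.smul_def]

lemma rid_lTensor_counit_tau2Hopf_comul (T : 𝓗 →ₗ[k] 𝓗) (h : 𝓗) :
    TensorProduct.rid k 𝓗 (LinearMap.lTensor 𝓗 counit (tau2Hopf T (comul h)))
      = (toConv T * toConv LinearMap.id : WithConv (𝓗 →ₗ[k] 𝓗)) h := by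
  rw [(ℛ k h).convMul_apply, ← (ℛ k h).eq, map_sum]
  simp only [map_sum, tau2Hopf, TensorProduct.lift.tmul, LinearMap.mk₂_apply,
    rid_lTensor_counit_mul_tmul_one, rid_lTensor_counit_comul, LinearMap.id_apply]

lemma convMul_id_eq_of_tau2Hopf_comul {T : 𝓗 →ₗ[k] 𝓗}
    (hcyc : ∀ h : 𝓗, tau2Hopf T (comul h) = (1 : 𝓗) ⊗ₜ[k] T h) :
    toConv T * toConv LinearMap.id = toConv (Algebra.linearMap k 𝓗 ∘ₗ counit ∘ₗ T) := by
  ext h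
  rw [← rid_lTensor_counit_tau2Hopf_comul, hcyc]
  simp [Algebra.smul_def]

lemma eq_convMul_antipode_of_tau2Hopf_comul {T : 𝓗 →ₗ[k] 𝓗}
    (hcyc : ∀ h : 𝓗, tau2Hopf T (comul h) = (1 : 𝓗) ⊗ₜ[k] T h) :
    toConv T
      = toConv (Algebra.linearMap k 𝓗 ∘ₗ counit ∘ₗ T) * toConv (HopfAlgebra.antipode k) := by
  rw [← convMul_id_eq_of_tau2Hopf_comul hcyc, mul_assoc, LinearMap.id_mul_antipode, mul_one]

/-- conversely, if an anti-algebra map `T` satisfies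
`T(h⁽¹⁾)⁽¹⁾h⁽²⁾ ⊗ T(h⁽¹⁾)⁽²⁾ = 1 ⊗ T(h)`, then `δ := ε ∘ T` is a character and
`T = δ * S`, i.e. `T h = δ(h⁽¹⁾) S(h⁽²⁾)`. -/
theorem antiAlg_cyclic_iff_twistedAntipode (T : 𝓗 →ₗ[k] 𝓗)
    (hT1 : T 1 = 1) (hTm : ∀ a b : 𝓗, T (a * b) = T b * T a)
    (hcyc : ∀ h : 𝓗, tau2Hopf T (comul h) = (1 : 𝓗) ⊗ₜ[k] T h) :
    (counit (R := k) (T 1) = 1) ∧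
    (∀ a b : 𝓗, counit (R := k) (T (a * b)) = counit (R := k) (T a) * counit (R := k) (T b)) ∧
    (∀ h : 𝓗,
      T h = (TensorProduct.lift
        (LinearMap.mk₂ k (fun x y => counit (R := k) (T x) • HopfAlgebra.antipode (R := k) y)
          (by intro x x' y; simp [map_add, add_smul])
          (by intro c x y; simp [mul_smul])
          (by intro x y y'; simp [map_add, smul_add])
          (by intro c x y; simp only [map_smul]; rw [smul_comm]))) (comul h)) := by
  refine ⟨by rw [hT1, Bialgebra.counit_one],
    fun a b => by rw [hTm, Bialgebra.counit_mul, mul_comm], fun h => ?_⟩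
  refine (congrArg (· h) (eq_convMul_antipode_of_tau2Hopf_comul hcyc)).trans ?_
  rw [(ℛ k h).convMul_algebraMap_comp_apply, ← (ℛ k h).eq, map_sum]
  simp only [TensorProduct.lift.tmul, LinearMap.mk₂_apply, LinearMap.comp_apply]
end
end
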